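/- With α real, |α|<1, f(λ)=1/|1-αe^{-iλ}|², and S₄ = {-5,-4,-3,0,1}: the spectral characteristic h₄(e^{iλ}) = Σ_{j∈S₄} a(j)e^{ijλ} − (Σ_{j∈S₄} c(j)e^{ijλ})(1+α² − αe^{iλ} − αe^{-iλ}) simplifies, for c solving the Toeplitz system, to h₄(e^{iλ}) = α c(1)e^{2iλ} + α c(0)e^{-iλ} + α c(-3)e^{-2iλ} + α c(-5)e^{-6iλ}. -/

import Mathlib

/-!
Multiplying `∑ c(j) e^{ijλ}` by the symbol `∑ b(m) e^{imλ}` convolves `c` with `b`. The Toeplitz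
system says that `b * c` agrees with `a` on `S₄`, so only the coefficients of `b * c` at
`(S₄ + {-1, 0, 1}) \ S₄ = {-6, -2, -1, 2}` survive, and each of them is a single term `-α c(j)`.
-/

open Real Complex
open Finset Pointwise

section Convolution

variable {R : Type*} [CommRing R] {e : ℤ → R}

theorem sum_mul_sum_eq_sum_convolution (he : ∀ j m, e (j + m) = e j * e m)
    (S M : Finset ℤ) (b c : ℤ → R) (hb : ∀ m ∉ M, b m = 0) :
    (∑ j ∈ S, c j * e j) * (∑ m ∈ M, b m * e m) =
      ∑ n ∈ S + M, (∑ j ∈ S, b (n - j) * c j) * e n := by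
  simp_rw [sum_mul, mul_sum]
  conv_rhs => rw [sum_comm]
  refine sum_congr rfl fun j hj => ?_
  have hsub : M.map (addLeftEmbedding j) ⊆ S + M := by
    intro n hn
    obtain ⟨m, hm, rfl⟩ := mem_map.1 hn
    exact add_mem_add hj hm
  rw [← sum_subset hsub, sum_map]
  · refine sum_congr rfl fun m _ => ?_
    simp only [addLeftEmbedding_apply, add_sub_cancel_left, he]
    ring
  · intro n _ hn
    have : n - j ∉ M := fun h => hn (mem_map.2 ⟨n - j, h, by simp⟩)
    simp [hb _ this]

theorem sum_sub_sum_mul_sum_eq_neg_sum_sdiff (he : ∀ j m, e (j + m) = e j * e m)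
    {S M : Finset ℤ} (hM : (0 : ℤ) ∈ M) (a b c : ℤ → R) (hb : ∀ m ∉ M, b m = 0)
    (hc : ∀ n ∈ S, ∑ j ∈ S, b (n - j) * c j = a n) :
    ∑ j ∈ S, a j * e j - (∑ j ∈ S, c j * e j) * (∑ m ∈ M, b m * e m) =
      -∑ n ∈ (S + M) \ S, (∑ j ∈ S, b (n - j) * c j) * e n := by
  have hS : S ⊆ S + M := fun n hn => by simpa using add_mem_add hn hM
  rw [sum_mul_sum_eq_sum_convolution he S M b c hb, ← sum_sdiff hS,
    sum_congr rfl fun n hn => congrArg (· * e n) (hc n hn)]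
  ring

end Convolution

theorem ar1_spectral_characteristic_simplification_general
    (α : ℝ) (a c b : ℤ → ℝ)
    (hb : ∀ m : ℤ, b m = if m = 0 then 1 + α ^ 2
      else if m = 1 ∨ m = -1 then -α else 0)
    (hc : ∀ n ∈ ({-5, -4, -3, 0, 1} : Finset ℤ),
      ∑ j ∈ ({-5, -4, -3, 0, 1} : Finset ℤ), b (n - j) * c j = a n) :
    ∀ lam : ℝ,
      (∑ j ∈ ({-5, -4, -3, 0, 1} : Finset ℤ),
          (a j : ℂ) * Complex.exp (Complex.I * j * lam)) -
        (∑ j ∈ ({-5, -4, -3, 0, 1} : Finset ℤ),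
          (c j : ℂ) * Complex.exp (Complex.I * j * lam)) *
          (1 + (α : ℂ) ^ 2 - (α : ℂ) * Complex.exp (Complex.I * lam)
            - (α : ℂ) * Complex.exp (-(Complex.I * lam))) =
      (α : ℂ) * (c 1 : ℂ) * Complex.exp (2 * Complex.I * lam) +
        (α : ℂ) * (c 0 : ℂ) * Complex.exp (-(Complex.I * lam)) +
        (α : ℂ) * (c (-3) : ℂ) * Complex.exp (-(2 * Complex.I * lam)) +
        (α : ℂ) * (c (-5) : ℂ) * Complex.exp (-(6 * Complex.I * lam)) := by
  intro lam
  set e : ℤ → ℂ := fun n => exp (I * n * lam) with he_def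
  have he : ∀ j m, e (j + m) = e j * e m := fun j m => by
    simp only [he_def, ← Complex.exp_add]; push_cast; ring_nf
  have hexp : ∀ (n : ℤ) (w : ℂ), w = I * n * lam → exp w = e n := by
    rintro n w rfl; rfl
  have hb_supp : ∀ m ∉ ({-1, 0, 1} : Finset ℤ), (b m : ℂ) = 0 := fun m hm => by
    simp only [mem_insert, mem_singleton, not_or] at hm
    simp [hb, hm.1, hm.2.1, hm.2.2]
  have hsymbol : 1 + (α : ℂ) ^ 2 - α * exp (I * lam) - α * exp (-(I * lam)) =
      ∑ m ∈ ({-1, 0, 1} : Finset ℤ), (b m : ℂ) * e m := by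
    rw [sum_insert (by decide), sum_insert (by decide), sum_singleton, hb, hb, hb,
      hexp 1 (I * lam) (by push_cast; ring), hexp (-1) (-(I * lam)) (by push_cast; ring),
      ← hexp 0 0 (by push_cast; ring), Complex.exp_zero]
    norm_num
    ring
  have hcC : ∀ n ∈ ({-5, -4, -3, 0, 1} : Finset ℤ),
      ∑ j ∈ ({-5, -4, -3, 0, 1} : Finset ℤ), (b (n - j) : ℂ) * c j = a n := fun n hn => by
    exact_mod_cast hc n hn
  rw [hsymbol, sum_sub_sum_mul_sum_eq_neg_sum_sdiff he (by decide) _ _ _ hb_supp hcC,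
    show ({-5, -4, -3, 0, 1} + {-1, 0, 1} : Finset ℤ) \ {-5, -4, -3, 0, 1} = {-6, -2, -1, 2} by
      decide,
    hexp 2 (2 * I * lam) (by push_cast; ring),
    hexp (-1) (-(I * lam)) (by push_cast; ring),
    hexp (-2) (-(2 * I * lam)) (by push_cast; ring),
    hexp (-6) (-(6 * I * lam)) (by push_cast; ring)]
  simp [hb]

/-- Simplification of the spectral characteristic `h₄` for the real AR(1)
sequence and the missing set `S₄ = {-5,-4,-3,0,1}`: after using the Toeplitz
equations for `c`, only the four terms supported outside `S₄` remain. -/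
theorem ar1_spectral_characteristic_simplification
    (α : ℝ) (hα : |α| < 1) (a c b : ℤ → ℝ)
    (hb : ∀ m : ℤ, b m = if m = 0 then 1 + α ^ 2
      else if m = 1 ∨ m = -1 then -α else 0)
    (hc : ∀ n ∈ ({-5, -4, -3, 0, 1} : Finset ℤ),
      ∑ j ∈ ({-5, -4, -3, 0, 1} : Finset ℤ), b (n - j) * c j = a n) :
    ∀ lam : ℝ,
      (∑ j ∈ ({-5, -4, -3, 0, 1} : Finset ℤ),
          (a j : ℂ) * Complex.exp (Complex.I * j * lam)) -
        (∑ j ∈ ({-5, -4, -3, 0, 1} : Finset ℤ),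
          (c j : ℂ) * Complex.exp (Complex.I * j * lam)) *
          (1 + (α : ℂ) ^ 2 - (α : ℂ) * Complex.exp (Complex.I * lam)
            - (α : ℂ) * Complex.exp (-(Complex.I * lam))) =
      (α : ℂ) * (c 1 : ℂ) * Complex.exp (2 * Complex.I * lam) +
        (α : ℂ) * (c 0 : ℂ) * Complex.exp (-(Complex.I * lam)) +
        (α : ℂ) * (c (-3) : ℂ) * Complex.exp (-(2 * Complex.I * lam)) +
        (α : ℂ) * (c (-5) : ℂ) * Complex.exp (-(6 * Complex.I * lam)) :=
  ar1_spectral_characteristic_simplification_general α a c b hb hc
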